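/- (Theorem 3.2, soundness and completeness of the mixed strategy.) Let T_full be a tree ensemble over ℝ^d, F_S ⊆ {1,…,d}, x ∈ ℝ^d, δ > 0, and T_prun = Prune(T_full, F_S, x). Let a_prun ∈ Option(ℝ^d) be the outcome of the pruned search and a_full ∈ Option(ℝ^d) the outcome of the full search, and assume: (i) soundness of the pruned search: if a_prun = some x̃ then x̃_f = x_f for every f ∉ F_S, ‖x − x̃‖_∞ < δ, and the predicted labels of T_prun on x and x̃ differ; (ii) soundness of the full search: if a_full = some x̃ then ‖x − x̃‖_∞ < δ and the predicted labels of T_full on x and x̃ differ; (iii) completeness of the full search: if there exists x̃ with ‖x − x̃‖_∞ < δ such that the predicted labels of T_full on x and x̃ differ, then a_full = some x̃' for some x̃'. Define the mixed outcome as a_prun if a_prun = some x̃ for some x̃, and a_full otherwise. Then, if there exists an adversarial example for x with respect to T_full and δ, the mixed outcome equals some x̃ where x̃ satisfies ‖x − x̃‖_∞ < δ and the predicted labels of T_full on x and on x̃ differ. -/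
import Mathlib


open scoped Classical

/-- A binary decision tree over ℝ^d: either a leaf carrying a real output value,
or an internal node with a feature index, a threshold, and two subtrees. -/
inductive DTree (d : ℕ) : Type where
  | leaf : ℝ → DTree d
  | node : Fin d → ℝ → DTree d → DTree d → DTree d

/-- Evaluation of a decision tree on an example. -/
noncomputable def DTree.eval {d : ℕ} : DTree d → (Fin d → ℝ) → ℝ
  | .leaf v, _ => v
  | .node f t L R, x => if x f < t then L.eval x else R.eval x

/-- Pruning a tree with respect to a set of selected features `FS` and anchor example `x`:
splits on selected features are kept; splits on non-selected features are replaced by the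
branch that `x` follows. -/
noncomputable def DTree.prune {d : ℕ} (FS : Set (Fin d)) (x : Fin d → ℝ) : DTree d → DTree d
  | .leaf v => .leaf v
  | .node f t L R =>
    if f ∈ FS then .node f t (L.prune FS x) (R.prune FS x)
    else if x f < t then L.prune FS x else R.prune FS x

/-- The raw output of a tree ensemble: the sum of the evaluations of its trees. -/
noncomputable def rawOutput {d : ℕ} (T : List (DTree d)) (x : Fin d → ℝ) : ℝ :=
  (T.map fun t => t.eval x).sum

/-- The predicted label of a tree ensemble: +1 if the raw output is positive, -1 otherwise. -/
noncomputable def label {d : ℕ} (T : List (DTree d)) (x : Fin d → ℝ) : ℤ :=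
  if 0 < rawOutput T x then 1 else -1

/-- Pruning an ensemble: prune each of its trees. -/
noncomputable def pruneEnsemble {d : ℕ} (T : List (DTree d)) (FS : Set (Fin d))
    (x : Fin d → ℝ) : List (DTree d) :=
  T.map (DTree.prune FS x)

/-- `xt` is an adversarial example for `x` with respect to the ensemble `T` and
maximum perturbation size `δ`: it is within ℓ∞-distance `δ` of `x` (the sup norm is the
norm of the pi type `Fin d → ℝ`) and the predicted labels differ. -/
def IsAdversarial {d : ℕ} (T : List (DTree d)) (x : Fin d → ℝ) (δ : ℝ) (xt : Fin d → ℝ) :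
    Prop :=
  ‖x - xt‖ < δ ∧ label T x ≠ label T xt


lemma prune_eval_eq {d : ℕ} (FS : Set (Fin d)) (x y : Fin d → ℝ)
    (hy : ∀ f : Fin d, f ∉ FS → y f = x f) :
    ∀ T : DTree d, (T.prune FS x).eval y = T.eval y := by
  intro T
  induction T with
  | leaf v => rfl
  | node f t L R ihL ihR =>
    simp only [DTree.prune]
    by_cases hf : f ∈ FS
    · simp [hf, DTree.eval, ihL, ihR]
    · simp only [hf, if_false]
      by_cases h : x f < t
      · simp [h, DTree.eval, hy f hf, ihL]
      · simp [h, DTree.eval, hy f hf, ihR]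

lemma label_prune_eq {d : ℕ} (T : List (DTree d)) (FS : Set (Fin d)) (x y : Fin d → ℝ)
    (hy : ∀ f : Fin d, f ∉ FS → y f = x f) :
    label (pruneEnsemble T FS x) y = label T y := by
  unfold label rawOutput pruneEnsemble
  simp only [List.map_map]
  have : (List.map ((fun t => t.eval y) ∘ DTree.prune FS x) T) = List.map (fun t => t.eval y) T := by
    apply List.map_congr_left
    intro t _
    exact prune_eval_eq FS x y hy t
  rw [this]

/-- Theorem 3.2: soundness and completeness of the mixed strategy.
Given a sound pruned search and a sound and complete full search, the mixed strategy
(return the pruned search's answer if it found one, otherwise run the full search)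
finds an adversarial example w.r.t. the full ensemble whenever one exists. -/
theorem mixed_strategy_sound_complete {d : ℕ} (Tfull : List (DTree d))
    (FS : Set (Fin d)) (x : Fin d → ℝ) (δ : ℝ) (hδ : 0 < δ)
    (Tprun : List (DTree d)) (hprun : Tprun = pruneEnsemble Tfull FS x)
    (aprun afull : Option (Fin d → ℝ))
    -- (i) soundness of the pruned search
    (hprunSound : ∀ xt : Fin d → ℝ, aprun = some xt →
      (∀ f : Fin d, f ∉ FS → xt f = x f) ∧ ‖x - xt‖ < δ ∧
        label Tprun x ≠ label Tprun xt)
    -- (ii) soundness of the full search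
    (hfullSound : ∀ xt : Fin d → ℝ, afull = some xt →
      ‖x - xt‖ < δ ∧ label Tfull x ≠ label Tfull xt)
    -- (iii) completeness of the full search
    (hfullComplete : (∃ xt : Fin d → ℝ, ‖x - xt‖ < δ ∧ label Tfull x ≠ label Tfull xt) →
      ∃ xt' : Fin d → ℝ, afull = some xt') :
    (∃ xt : Fin d → ℝ, IsAdversarial Tfull x δ xt) →
      ∃ xt : Fin d → ℝ,
        (if aprun.isSome then aprun else afull) = some xt ∧
        ‖x - xt‖ < δ ∧ label Tfull x ≠ label Tfull xt := by
  rintro ⟨xt0, hxt0⟩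
  cases haprun : aprun with
  | some xt =>
    obtain ⟨hfix, hnorm, hlab⟩ := hprunSound xt haprun
    refine ⟨xt, by simp [haprun], hnorm, ?_⟩
    rw [hprun] at hlab
    rwa [label_prune_eq Tfull FS x x (fun _ _ => rfl),
      label_prune_eq Tfull FS x xt hfix] at hlab
  | none =>
    obtain ⟨xt', hxt'⟩ := hfullComplete ⟨xt0, hxt0.1, hxt0.2⟩
    obtain ⟨hnorm, hlab⟩ := hfullSound xt' hxt'
    exact ⟨xt', by simp [haprun, hxt'], hnorm, hlab⟩
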